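/- arXiv:1908.07444 — 4 statements merged into one kernel-verified Lean document; each statement's English description precedes it below -/
import Mathlib

section
/- Let ν be a Jacobi measure with parameters 0 < l < 1 and β > 1, let d > 0, and define H(τ) := d^{-1}∫_l^1 t²/((Re τ + t)² + (Im τ)²) dν(t) for τ ∈ ℂ. Then: (a) for every fixed x ∈ ℝ, the function y ↦ H(x + iy) is strictly decreasing on (0, ∞); (b) for every fixed x ∈ ℝ, H(x + iy) → 0 as y → ∞; (c) for every fixed x ∈ (−1, −l), H(x + iy) → ∞ as y → 0⁺; consequently, for every x ∈ (−1, −l) there exists a unique y > 0 such that H(x + iy) = 1. -/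
open MeasureTheory Set

noncomputable def jacobiDensity (l β Z : ℝ) (f : ℝ → ℝ) : ℝ → ℝ :=
  Set.indicator (Set.Icc l 1) (fun t => Z⁻¹ * (1 - t) ^ β * f t)

/-- `ν` is a Jacobi measure with parameters `l`, `β`, profile `f` and normalizing constant `Z`. -/
structure IsJacobi (ν : Measure ℝ) (l β : ℝ) (f : ℝ → ℝ) (Z : ℝ) : Prop where
  l_pos : 0 < l
  l_lt_one : l < 1
  f_C1 : ContDiffOn ℝ 1 f (Set.Icc l 1)
  f_pos : ∀ t ∈ Set.Icc l 1, 0 < f t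
  Z_def : Z = ∫ t in Set.Icc l 1, (1 - t) ^ β * f t
  eq_density : ν = volume.withDensity (fun t => ENNReal.ofReal (jacobiDensity l β Z f t))
  prob : IsProbabilityMeasure ν

/-- Stieltjes transform of a measure on ℝ. -/
noncomputable def stieltjes (μ : Measure ℝ) (z : ℂ) : ℂ := ∫ x, ((x : ℂ) - z)⁻¹ ∂μ

open Filter Topology

/-!
Along the line `Re τ = x`, `H` is `d⁻¹ ∫ t² / ((x + t)² + y²) dν(t)`. The integrand is strictly
decreasing in `y > 0` and bounded by `t² / y²`, which gives strict monotonicity, continuity and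
decay as soon as `ν` has a finite second moment and is not concentrated at `0`. For
`x ∈ (-1, -l)` the Jacobi density is continuous and positive at `-x`, so
`ν [-x - y, -x + y] ≥ c y` for small `y`; on that interval the integrand is at least
`x² / (8 y²)`, hence `H(x + iy) ≳ 1 / y`. The intermediate value theorem then solves `H = 1`.
-/

lemma existsUnique_eq_of_strictAntiOn_Ioi {g : ℝ → ℝ} {b c : ℝ}
    (hcont : ContinuousOn g (Ioi 0)) (hanti : StrictAntiOn g (Ioi 0))
    (hzero : Tendsto g (𝓝[>] 0) atTop) (htop : Tendsto g atTop (𝓝 b)) (hbc : b < c) :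
    ∃! y, 0 < y ∧ g y = c := by
  obtain ⟨y₁, hgy₁, hy₁⟩ :=
    ((hzero.eventually (eventually_gt_atTop c)).and self_mem_nhdsWithin).exists
  obtain ⟨y₂, hgy₂, hy₁₂⟩ :=
    ((htop.eventually (eventually_lt_nhds hbc)).and (eventually_gt_atTop y₁)).exists
  obtain ⟨y, hy, hgy⟩ := intermediate_value_Icc' hy₁₂.le
    (hcont.mono fun t ht => lt_of_lt_of_le hy₁ ht.1) ⟨hgy₂.le, hgy₁.le⟩
  have hy₀ : 0 < y := lt_of_lt_of_le hy₁ hy.1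
  exact ⟨y, ⟨hy₀, hgy⟩, fun z hz => hanti.injOn hz.1 hy₀ (hz.2.trans hgy.symm)⟩

lemma eventually_ofReal_mul_le_withDensity_Icc {ρ : ℝ → ℝ} {a : ℝ} (hρ : ContinuousAt ρ a)
    (ha : 0 < ρ a) : ∀ᶠ y in 𝓝[>] 0, ENNReal.ofReal (ρ a * y) ≤
      volume.withDensity (fun t => ENNReal.ofReal (ρ t)) (Icc (a - y) (a + y)) := by
  obtain ⟨ε, hε, hball⟩ :=
    Metric.eventually_nhds_iff.mp (hρ.eventually (lt_mem_nhds (half_lt_self ha)))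
  filter_upwards [Ioo_mem_nhdsGT hε] with y ⟨hy₀, hyε⟩
  rw [show ρ a * y = ρ a / 2 * (2 * y) by ring, withDensity_apply _ measurableSet_Icc,
    ENNReal.ofReal_mul (by positivity),
    ← show volume (Icc (a - y) (a + y)) = ENNReal.ofReal (2 * y) by rw [Real.volume_Icc]; ring_nf,
    ← setLIntegral_const]
  refine setLIntegral_mono' measurableSet_Icc fun t ht => ENNReal.ofReal_le_ofReal (hball ?_).le
  rw [Real.dist_eq, abs_lt]
  constructor <;> linarith [ht.1, ht.2]

noncomputable def sqRatioTransform (ν : Measure ℝ) (x y : ℝ) : ℝ :=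
  ∫ t, t ^ 2 / ((x + t) ^ 2 + y ^ 2) ∂ν

lemma sq_div_le_sq_div_of_le {c y : ℝ} (hc : 0 < c) (hcy : c ≤ y) (x t : ℝ) :
    t ^ 2 / ((x + t) ^ 2 + y ^ 2) ≤ t ^ 2 / c ^ 2 :=
  div_le_div_of_nonneg_left (sq_nonneg t) (by positivity) (by nlinarith [sq_nonneg (x + t)])

section sqRatioTransform

variable {ν : Measure ℝ}

lemma integrable_sq_div (hν : Integrable (fun t => t ^ 2) ν) (x : ℝ) {c y : ℝ}
    (hc : 0 < c) (hcy : c ≤ y) : Integrable (fun t => t ^ 2 / ((x + t) ^ 2 + y ^ 2)) ν := by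
  refine (hν.div_const (c ^ 2)).mono' (by fun_prop : Measurable _).aestronglyMeasurable
    (ae_of_all _ fun t => ?_)
  rw [Real.norm_of_nonneg (by positivity)]
  exact sq_div_le_sq_div_of_le hc hcy x t

lemma sqRatioTransform_nonneg (x y : ℝ) : 0 ≤ sqRatioTransform ν x y :=
  integral_nonneg fun t => by positivity

lemma sqRatioTransform_le (hν : Integrable (fun t => t ^ 2) ν) (x : ℝ) {y : ℝ} (hy : 0 < y) :
    sqRatioTransform ν x y ≤ (∫ t, t ^ 2 ∂ν) / y ^ 2 := by
  rw [← integral_div]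
  exact integral_mono (integrable_sq_div hν x hy le_rfl) (hν.div_const _)
    (sq_div_le_sq_div_of_le hy le_rfl x)

lemma tendsto_sqRatioTransform_atTop (hν : Integrable (fun t => t ^ 2) ν) (x : ℝ) :
    Tendsto (sqRatioTransform ν x) atTop (𝓝 0) := by
  have hbound : Tendsto (fun y : ℝ => (∫ t, t ^ 2 ∂ν) / y ^ 2) atTop (𝓝 0) :=
    tendsto_const_nhds.div_atTop (tendsto_pow_atTop two_ne_zero)
  refine tendsto_of_tendsto_of_tendsto_of_le_of_le' tendsto_const_nhds hbound
    (Eventually.of_forall (sqRatioTransform_nonneg x)) ?_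
  filter_upwards [eventually_gt_atTop 0] with y hy using sqRatioTransform_le hν x hy

lemma continuousOn_sqRatioTransform (hν : Integrable (fun t => t ^ 2) ν) (x : ℝ) :
    ContinuousOn (sqRatioTransform ν x) (Ioi 0) := by
  intro y₀ (hy₀ : 0 < y₀)
  have hy₀' : y₀ / 2 < y₀ := half_lt_self hy₀
  refine (continuousAt_of_dominated (bound := fun t => t ^ 2 / (y₀ / 2) ^ 2) ?_ ?_
    (hν.div_const _) (ae_of_all _ fun t => ?_)).continuousWithinAt
  · filter_upwards [eventually_gt_nhds hy₀'] with y hy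
    exact (integrable_sq_div hν x (half_pos hy₀) hy.le).aestronglyMeasurable
  · filter_upwards [eventually_gt_nhds hy₀'] with y hy
    refine ae_of_all _ fun t => ?_
    rw [Real.norm_of_nonneg (by positivity)]
    exact sq_div_le_sq_div_of_le (half_pos hy₀) hy.le x t
  · have : (x + t) ^ 2 + y₀ ^ 2 ≠ 0 := by positivity
    fun_prop (disch := exact this)

lemma strictAntiOn_sqRatioTransform (hν : Integrable (fun t => t ^ 2) ν)
    (hν₀ : ∃ᵐ t ∂ν, t ≠ 0) (x : ℝ) : StrictAntiOn (sqRatioTransform ν x) (Ioi 0) := by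
  intro y₁ (hy₁ : 0 < y₁) y₂ _ h12
  have hi₁ := integrable_sq_div hν x hy₁ le_rfl
  have hi₂ := integrable_sq_div hν x hy₁ h12.le
  have hpointwise : ∀ t, t ≠ 0 →
      t ^ 2 / ((x + t) ^ 2 + y₂ ^ 2) < t ^ 2 / ((x + t) ^ 2 + y₁ ^ 2) := fun t ht =>
    div_lt_div_of_pos_left (by positivity) (by positivity) (by nlinarith)
  have hi : Integrable
      (fun t => t ^ 2 / ((x + t) ^ 2 + y₁ ^ 2) - t ^ 2 / ((x + t) ^ 2 + y₂ ^ 2)) ν :=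
    hi₁.sub hi₂
  have hdiff :
      0 < ∫ t, (t ^ 2 / ((x + t) ^ 2 + y₁ ^ 2) - t ^ 2 / ((x + t) ^ 2 + y₂ ^ 2)) ∂ν := by
    rw [integral_pos_iff_support_of_nonneg_ae _ hi]
    · refine (frequently_ae_iff.mp hν₀).bot_lt.trans_le (measure_mono fun t ht => ?_)
      exact (sub_pos.mpr (hpointwise t ht)).ne'
    · refine ae_of_all _ fun t => sub_nonneg.mpr ?_
      rcases eq_or_ne t 0 with rfl | ht
      · simp
      · exact (hpointwise t ht).le
  rwa [integral_sub hi₁ hi₂, sub_pos] at hdiff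

lemma tendsto_sqRatioTransform_nhdsGT_zero [IsFiniteMeasure ν]
    (hν : Integrable (fun t => t ^ 2) ν) {x c : ℝ} (hx : x ≠ 0) (hc : 0 < c)
    (hmass : ∀ᶠ y in 𝓝[>] 0, ENNReal.ofReal (c * y) ≤ ν (Icc (-x - y) (-x + y))) :
    Tendsto (sqRatioTransform ν x) (𝓝[>] 0) atTop := by
  have hsmall : ∀ᶠ y in 𝓝[>] (0 : ℝ), y ∈ Ioc 0 (|x| / 2) :=
    Ioc_mem_nhdsGT (by positivity)
  refine tendsto_atTop_mono' _ ?_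
    (tendsto_inv_nhdsGT_zero.const_mul_atTop (by positivity : 0 < x ^ 2 / 8 * c))
  filter_upwards [hmass, hsmall] with y hy ⟨hy₀, hyx⟩
  set S := Icc (-x - y) (-x + y)
  have hkernel : ∀ t ∈ S, x ^ 2 / 8 / y ^ 2 ≤ t ^ 2 / ((x + t) ^ 2 + y ^ 2) := by
    rintro t ⟨ht₁, ht₂⟩
    have hnum : x ^ 2 / 4 ≤ t ^ 2 := by
      cases abs_cases x <;> nlinarith
    have hden : (x + t) ^ 2 + y ^ 2 ≤ 2 * y ^ 2 := by nlinarith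
    calc x ^ 2 / 8 / y ^ 2 = (x ^ 2 / 4) / (2 * y ^ 2) := by field_simp; ring
      _ ≤ t ^ 2 / ((x + t) ^ 2 + y ^ 2) := div_le_div₀ (sq_nonneg t) hnum (by positivity) hden
  have hmass' : c * y ≤ ν.real S := by
    rw [measureReal_def, ← ENNReal.ofReal_le_iff_le_toReal (measure_ne_top ν S)]
    exact hy
  have hint := integrable_sq_div hν x hy₀ le_rfl
  calc x ^ 2 / 8 * c * y⁻¹ = x ^ 2 / 8 / y ^ 2 * (c * y) := by field_simp
    _ ≤ x ^ 2 / 8 / y ^ 2 * ν.real S := by gcongr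
    _ ≤ ∫ t in S, t ^ 2 / ((x + t) ^ 2 + y ^ 2) ∂ν :=
      setIntegral_ge_of_const_le_real measurableSet_Icc (measure_ne_top ν S) hkernel
        hint.integrableOn
    _ ≤ sqRatioTransform ν x y :=
      setIntegral_le_integral hint (ae_of_all _ fun t => by positivity)

end sqRatioTransform

namespace IsJacobi

variable {ν : Measure ℝ} {l β Z : ℝ} {f : ℝ → ℝ}

lemma ae_mem_Icc (hν : IsJacobi ν l β f Z) : ∀ᵐ t ∂ν, t ∈ Icc l 1 := by
  change Icc l 1 ∈ ae ν
  rw [mem_ae_iff, hν.eq_density, withDensity_apply _ measurableSet_Icc.compl]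
  refine (setLIntegral_congr_fun measurableSet_Icc.compl fun t ht => ?_).trans lintegral_zero
  rw [jacobiDensity, indicator_of_notMem ht, ENNReal.ofReal_zero]

lemma integrable_sq (hν : IsJacobi ν l β f Z) : Integrable (fun t => t ^ 2) ν := by
  have := hν.prob
  refine Integrable.of_bound (by fun_prop) 1 ?_
  filter_upwards [hν.ae_mem_Icc] with t ⟨ht₁, ht₂⟩
  rw [Real.norm_of_nonneg (sq_nonneg t)]
  nlinarith [hν.l_pos]

lemma frequently_ne_zero (hν : IsJacobi ν l β f Z) : ∃ᵐ t ∂ν, t ≠ 0 := by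
  have := hν.prob
  exact (hν.ae_mem_Icc.mono fun t ht => (hν.l_pos.trans_le ht.1).ne').frequently

lemma normalizer_pos (hν : IsJacobi ν l β f Z) : 0 < Z := by
  have := hν.prob
  by_contra! hZ
  have hdensity : ∀ t, jacobiDensity l β Z f t ≤ 0 :=
    indicator_nonpos fun t ht => mul_nonpos_of_nonpos_of_nonneg
      (mul_nonpos_of_nonpos_of_nonneg (inv_nonpos.mpr hZ)
        (Real.rpow_nonneg (by linarith [ht.2]) β))
      (hν.f_pos t ht).le
  refine IsProbabilityMeasure.ne_zero ν ?_
  simp [hν.eq_density, ENNReal.ofReal_eq_zero.mpr (hdensity _)]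

lemma jacobiDensity_pos (hν : IsJacobi ν l β f Z) {a : ℝ} (ha : a ∈ Ico l 1) :
    0 < jacobiDensity l β Z f a := by
  rw [jacobiDensity, indicator_of_mem (Ico_subset_Icc_self ha)]
  have := Real.rpow_pos_of_pos (sub_pos.mpr ha.2) β
  have := hν.f_pos a (Ico_subset_Icc_self ha)
  have := inv_pos.mpr hν.normalizer_pos
  positivity

lemma continuousAt_jacobiDensity (hν : IsJacobi ν l β f Z) {a : ℝ} (ha : a ∈ Ioo l 1) :
    ContinuousAt (jacobiDensity l β Z f) a := by
  have hIcc : Icc l 1 ∈ 𝓝 a := Icc_mem_nhds ha.1 ha.2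
  have hf : ContinuousAt f a := (hν.f_C1.continuousOn).continuousAt hIcc
  have hrpow : ContinuousAt (fun t => (1 - t) ^ β) a :=
    (continuousAt_const.sub continuousAt_id).rpow_const (Or.inl (sub_pos.mpr ha.2).ne')
  have hρ : ContinuousAt (fun t => Z⁻¹ * (1 - t) ^ β * f t) a :=
    (continuousAt_const.mul hrpow).mul hf
  refine hρ.congr ?_
  filter_upwards [hIcc] with t ht
  rw [jacobiDensity, indicator_of_mem ht]

end IsJacobi

theorem H_monotone_limits_and_unique_solution_general
    (ν : Measure ℝ) (l β : ℝ) (f : ℝ → ℝ) (Z : ℝ)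
    (hν : IsJacobi ν l β f Z)
    (d : ℝ) (hd : 0 < d)
    (H : ℂ → ℝ)
    (hH : ∀ τ : ℂ, H τ = d⁻¹ * ∫ t, t ^ 2 / ((τ.re + t) ^ 2 + τ.im ^ 2) ∂ν) :
    (∀ x : ℝ, StrictAntiOn (fun y : ℝ => H (x + y * Complex.I)) (Set.Ioi 0)) ∧
    (∀ x : ℝ, Filter.Tendsto (fun y : ℝ => H (x + y * Complex.I)) Filter.atTop (nhds 0)) ∧
    (∀ x ∈ Set.Ioo (-1 : ℝ) (-l),
      Filter.Tendsto (fun y : ℝ => H (x + y * Complex.I))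
        (nhdsWithin 0 (Set.Ioi 0)) Filter.atTop) ∧
    (∀ x ∈ Set.Ioo (-1 : ℝ) (-l), ∃! y : ℝ, 0 < y ∧ H (x + y * Complex.I) = 1) := by
  have := hν.prob
  have hsq := hν.integrable_sq
  have hline : ∀ x y : ℝ, H (x + y * Complex.I) = d⁻¹ * sqRatioTransform ν x y := by
    simp [hH, sqRatioTransform]
  simp only [hline]
  have hanti (x : ℝ) : StrictAntiOn (fun y => d⁻¹ * sqRatioTransform ν x y) (Ioi 0) :=
    fun _ hy₁ _ hy₂ h => mul_lt_mul_of_pos_left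
      (strictAntiOn_sqRatioTransform hsq hν.frequently_ne_zero x hy₁ hy₂ h) (inv_pos.mpr hd)
  have htop (x : ℝ) : Tendsto (fun y => d⁻¹ * sqRatioTransform ν x y) atTop (𝓝 0) := by
    simpa using (tendsto_sqRatioTransform_atTop hsq x).const_mul d⁻¹
  have hzero (x : ℝ) (hx : x ∈ Ioo (-1) (-l)) :
      Tendsto (fun y => d⁻¹ * sqRatioTransform ν x y) (𝓝[>] 0) atTop := by
    have ha : -x ∈ Ioo l 1 := ⟨by linarith [hx.2], by linarith [hx.1]⟩
    have hmass := eventually_ofReal_mul_le_withDensity_Icc (hν.continuousAt_jacobiDensity ha)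
      (hν.jacobiDensity_pos (Ioo_subset_Ico_self ha))
    rw [← hν.eq_density] at hmass
    exact (tendsto_sqRatioTransform_nhdsGT_zero hsq (by linarith [hx.2, hν.l_pos] : x < 0).ne
      (hν.jacobiDensity_pos (Ioo_subset_Ico_self ha)) hmass).const_mul_atTop (inv_pos.mpr hd)
  refine ⟨hanti, htop, hzero, fun x hx =>
    existsUnique_eq_of_strictAntiOn_Ioi ?_ (hanti x) (hzero x hx) (htop x) zero_lt_one⟩
  exact continuousOn_const.mul (continuousOn_sqRatioTransform hsq x)

/-- properties of `H(τ) = d⁻¹ ∫ t²/((Re τ + t)² + (Im τ)²) dν(t)`: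
strict monotonicity in `Im τ`, decay at infinity, blow-up at the real axis for
`Re τ ∈ (−1, −l)`, and the resulting unique solvability of `H = 1`. -/
theorem H_monotone_limits_and_unique_solution
    (ν : Measure ℝ) (l β : ℝ) (f : ℝ → ℝ) (Z : ℝ)
    (hν : IsJacobi ν l β f Z) (hβ : 1 < β)
    (d : ℝ) (hd : 0 < d)
    (H : ℂ → ℝ)
    (hH : ∀ τ : ℂ, H τ = d⁻¹ * ∫ t, t ^ 2 / ((τ.re + t) ^ 2 + τ.im ^ 2) ∂ν) :
    (∀ x : ℝ, StrictAntiOn (fun y : ℝ => H (x + y * Complex.I)) (Set.Ioi 0)) ∧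
    (∀ x : ℝ, Filter.Tendsto (fun y : ℝ => H (x + y * Complex.I)) Filter.atTop (nhds 0)) ∧
    (∀ x ∈ Set.Ioo (-1 : ℝ) (-l),
      Filter.Tendsto (fun y : ℝ => H (x + y * Complex.I))
        (nhdsWithin 0 (Set.Ioi 0)) Filter.atTop) ∧
    (∀ x ∈ Set.Ioo (-1 : ℝ) (-l), ∃! y : ℝ, 0 < y ∧ H (x + y * Complex.I) = 1) :=
  H_monotone_limits_and_unique_solution_general ν l β f Z hν d hd H hH
end

section
/- Let ν be a Jacobi measure with parameters 0 < l < 1 and β > 1, let d > 0, let z = E + iη with η > 0, and let m ∈ ℂ with Im m > 0 satisfy the self-consistent equation m = (−z + d^{-1}∫_l^1 t/(1 + t m) dν(t))^{-1}. Then η·|m|²/Im m + d^{-1}∫_l^1 t²|m|²/|t m + 1|² dν(t) = 1; in particular, setting R₂ := d^{-1}∫_l^1 t²|m|²/|t m + 1|² dν(t), one has 0 ≤ R₂ < 1. -/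
open MeasureTheory Set

/-
Taking imaginary parts in `m⁻¹ = -z + d⁻¹ ∫ t / (1 + t m) dν` and using
`Im (t / (1 + t m)) = -Im m · t² / |t m + 1|²` gives
`-Im m / |m|² = -η - d⁻¹ Im m ∫ t² / |t m + 1|² dν`; multiplying by `-|m|² / Im m` is the identity.
The integrand is bounded by `1 / Im m`, since `|1 + t m| ≥ |t| Im m`, so everything is integrable
for any finite measure.
-/

lemma im_ofReal_div_one_add_ofReal_mul (m : ℂ) (t : ℝ) :
    ((t : ℂ) / (1 + t * m)).im = -m.im * (t ^ 2 / ‖(t : ℂ) * m + 1‖ ^ 2) := by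
  rw [Complex.sq_norm]
  simp only [Complex.div_im, Complex.normSq_apply, Complex.add_re, Complex.add_im,
    Complex.one_re, Complex.one_im, Complex.mul_re, Complex.mul_im,
    Complex.ofReal_re, Complex.ofReal_im]
  ring

lemma norm_ofReal_div_one_add_ofReal_mul_le {m : ℂ} (hm : 0 < m.im) (t : ℝ) :
    ‖(t : ℂ) / (1 + t * m)‖ ≤ m.im⁻¹ := by
  rcases eq_or_ne t 0 with rfl | ht
  · simpa using hm.le
  have ht' : 0 < |t| := abs_pos.mpr ht
  have hbound : |t| * m.im ≤ ‖1 + (t : ℂ) * m‖ := by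
    calc |t| * m.im = |(1 + (t : ℂ) * m).im| := by simp [abs_mul, abs_of_pos hm]
      _ ≤ ‖1 + (t : ℂ) * m‖ := Complex.abs_im_le_norm _
  rw [norm_div, Complex.norm_real, Real.norm_eq_abs,
    div_le_iff₀ ((mul_pos ht' hm).trans_le hbound)]
  calc |t| = m.im⁻¹ * (|t| * m.im) := by field_simp
    _ ≤ m.im⁻¹ * ‖1 + (t : ℂ) * m‖ := by gcongr

section FiniteMeasure

variable {ν : Measure ℝ} [IsFiniteMeasure ν] {m : ℂ}

lemma integrable_ofReal_div_one_add_ofReal_mul (hm : 0 < m.im) :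
    Integrable (fun t : ℝ => (t : ℂ) / (1 + t * m)) ν := by
  refine Integrable.mono' (integrable_const m.im⁻¹) ?_
    (Filter.Eventually.of_forall (norm_ofReal_div_one_add_ofReal_mul_le hm))
  exact (Complex.measurable_ofReal.div
    (measurable_const.add (Complex.measurable_ofReal.mul_const m))).aestronglyMeasurable

lemma im_integral_ofReal_div_one_add_ofReal_mul (hm : 0 < m.im) :
    (∫ t, (t : ℂ) / (1 + t * m) ∂ν).im
      = -m.im * ∫ t, t ^ 2 / ‖(t : ℂ) * m + 1‖ ^ 2 ∂ν := by
  have him : ∫ t, ((t : ℂ) / (1 + t * m)).im ∂ν = (∫ t, (t : ℂ) / (1 + t * m) ∂ν).im :=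
    integral_im (integrable_ofReal_div_one_add_ofReal_mul hm)
  rw [← him, ← integral_const_mul]
  exact integral_congr_ae (Filter.Eventually.of_forall (im_ofReal_div_one_add_ofReal_mul m))

end FiniteMeasure

lemma imaginary_part_identity_of_inv_eq {m z J : ℂ} {d I : ℝ} (hm : 0 < m.im)
    (hinv : m⁻¹ = -z + (d : ℂ)⁻¹ * J) (hJ : J.im = -m.im * I) :
    z.im * ‖m‖ ^ 2 / m.im + d⁻¹ * (‖m‖ ^ 2 * I) = 1 := by
  have him := congrArg Complex.im hinv
  rw [Complex.inv_im, Complex.add_im, Complex.neg_im, ← Complex.ofReal_inv, Complex.im_ofReal_mul,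
    hJ, ← Complex.sq_norm] at him
  have hnorm : ‖m‖ ≠ 0 := norm_ne_zero_iff.mpr fun h => by simp [h] at hm
  have hz : z.im = m.im / ‖m‖ ^ 2 - d⁻¹ * (m.im * I) := by linear_combination him
  rw [hz]
  field_simp
  ring

theorem self_consistent_imaginary_part_identity_general
    (ν : Measure ℝ) (l β : ℝ) (f : ℝ → ℝ) (Z : ℝ)
    (hν : IsJacobi ν l β f Z)
    (d : ℝ) (hd : 0 < d)
    (E η : ℝ) (hη : 0 < η) (z : ℂ) (hz : z = Complex.mk E η)
    (m : ℂ) (hm : 0 < m.im)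
    (hself : m = (-z + (d : ℂ)⁻¹ * ∫ t, (t : ℂ) / (1 + t * m) ∂ν)⁻¹)
    (R₂ : ℝ)
    (hR₂ : R₂ = d⁻¹ * ∫ t, t ^ 2 * ‖m‖ ^ 2 / ‖(t : ℂ) * m + 1‖ ^ 2 ∂ν) :
    η * ‖m‖ ^ 2 / m.im + R₂ = 1 ∧ 0 ≤ R₂ ∧ R₂ < 1 := by
  have := hν.prob
  have hR₂' : R₂ = d⁻¹ * (‖m‖ ^ 2 * ∫ t, t ^ 2 / ‖(t : ℂ) * m + 1‖ ^ 2 ∂ν) := by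
    rw [hR₂, ← integral_const_mul (‖m‖ ^ 2)]
    congr 2
    funext t
    ring
  have key : η * ‖m‖ ^ 2 / m.im + R₂ = 1 := by
    rw [hR₂']
    simpa [hz] using imaginary_part_identity_of_inv_eq (d := d) hm (inv_eq_iff_eq_inv.mpr hself)
      (im_integral_ofReal_div_one_add_ofReal_mul (ν := ν) hm)
  have hR₂_nonneg : 0 ≤ R₂ := by
    rw [hR₂]
    exact mul_nonneg (inv_nonneg.mpr hd.le) (integral_nonneg fun t => by positivity)
  have hm_ne : m ≠ 0 := fun h => by simp [h] at hm
  have hfirst_pos : 0 < η * ‖m‖ ^ 2 / m.im := by positivity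
  exact ⟨key, hR₂_nonneg, by linarith⟩

/-- the imaginary-part identity for a solution of the self-consistent equation:
`η|m|²/Im m + d⁻¹ ∫ t²|m|²/|tm+1|² dν = 1`, and hence `0 ≤ R₂ < 1`. -/
theorem self_consistent_imaginary_part_identity
    (ν : Measure ℝ) (l β : ℝ) (f : ℝ → ℝ) (Z : ℝ)
    (hν : IsJacobi ν l β f Z) (hβ : 1 < β)
    (d : ℝ) (hd : 0 < d)
    (E η : ℝ) (hη : 0 < η) (z : ℂ) (hz : z = Complex.mk E η)
    (m : ℂ) (hm : 0 < m.im)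
    (hself : m = (-z + (d : ℂ)⁻¹ * ∫ t, (t : ℂ) / (1 + t * m) ∂ν)⁻¹)
    (R₂ : ℝ)
    (hR₂ : R₂ = d⁻¹ * ∫ t, t ^ 2 * ‖m‖ ^ 2 / ‖(t : ℂ) * m + 1‖ ^ 2 ∂ν) :
    η * ‖m‖ ^ 2 / m.im + R₂ = 1 ∧ 0 ≤ R₂ ∧ R₂ < 1 :=
  self_consistent_imaginary_part_identity_general ν l β f Z hν d hd E η hη z hz m hm hself R₂ hR₂
end

section
/- Let N, M be positive integers, let σ_1, …, σ_M ∈ (0, 1], let z = E + iη with η > 0, and let m̂ ∈ ℂ with Im m̂ > 0 satisfy m̂ = (−z + (1/N)∑_{α=1}^M σ_α/(σ_α m̂ + 1))^{-1}. Then (1/N)∑_{α=1}^M σ_α²|m̂|²/|σ_α m̂ + 1|² = 1 − η·|m̂|²/Im m̂, and in particular (1/N)∑_{α=1}^M σ_α²|m̂|²/|σ_α m̂ + 1|² < 1. -/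
/-! Taking imaginary parts of the self-consistent equation `m⁻¹ = -z + c ∑ σ/(σ m + 1)` gives,
since `Im m⁻¹ = -Im m / |m|²` and `Im (σ / (σ m + 1)) = -σ² Im m / |σ m + 1|²` for real `σ`,
`-Im m / |m|² = -η - c Im m ∑ σ² / |σ m + 1|²`. Multiplying by `-|m|² / Im m` yields the identity,
and its right-hand side is `< 1` because `η`, `|m|²` and `Im m` are positive. -/

open Complex

namespace Complex

theorem ofReal_div_im (s : ℝ) (w : ℂ) : ((s : ℂ) / w).im = -(s * w.im) / normSq w := by
  simp only [div_im, ofReal_re, ofReal_im, zero_mul, zero_div, zero_sub, neg_div]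

theorem ofReal_div_ofReal_mul_add_one_im (s : ℝ) (m : ℂ) :
    ((s : ℂ) / (s * m + 1)).im = -(s ^ 2 * m.im) / normSq (s * m + 1) := by
  rw [ofReal_div_im]
  simp only [add_im, im_ofReal_mul, one_im, add_zero]
  ring

theorem im_sum_ofReal_div_ofReal_mul_add_one {ι : Type*} [Fintype ι] (σ : ι → ℝ) (m : ℂ) :
    (∑ i, (σ i : ℂ) / (σ i * m + 1)).im = -m.im * ∑ i, σ i ^ 2 / normSq (σ i * m + 1) := by
  rw [im_sum, Finset.mul_sum]
  refine Finset.sum_congr rfl fun i _ => ?_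
  rw [ofReal_div_ofReal_mul_add_one_im]
  ring

end Complex

theorem self_consistent_im_identity {ι : Type*} [Fintype ι] (σ : ι → ℝ) (c : ℝ) (z m : ℂ)
    (hm : m.im ≠ 0) (hself : m⁻¹ = -z + c * ∑ i, (σ i : ℂ) / (σ i * m + 1)) :
    c * ∑ i, σ i ^ 2 * ‖m‖ ^ 2 / ‖(σ i * m + 1 : ℂ)‖ ^ 2 = 1 - z.im * ‖m‖ ^ 2 / m.im := by
  have him := congrArg im hself
  rw [inv_im, add_im, neg_im, im_ofReal_mul, im_sum_ofReal_div_ofReal_mul_add_one] at him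
  set A := ∑ i, σ i ^ 2 / normSq (σ i * m + 1)
  have hsum : ∑ i, σ i ^ 2 * ‖m‖ ^ 2 / ‖(σ i * m + 1 : ℂ)‖ ^ 2 = normSq m * A := by
    rw [Finset.mul_sum]
    refine Finset.sum_congr rfl fun i _ => ?_
    rw [Complex.sq_norm, Complex.sq_norm]
    ring
  have hm0 : normSq m ≠ 0 := (normSq_pos.mpr fun h => hm (by rw [h, zero_im])).ne'
  rw [hsum, Complex.sq_norm]
  field_simp at him ⊢
  linear_combination him

theorem empirical_self_consistent_imaginary_part_identity_general
    (N M : ℕ)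
    (σ : Fin M → ℝ)
    (E η : ℝ) (hη : 0 < η) (z : ℂ) (hz : z = Complex.mk E η)
    (mhat : ℂ) (hmhat : 0 < mhat.im)
    (hself : mhat =
      (-z + (N : ℂ)⁻¹ * ∑ α : Fin M, (σ α : ℂ) / (σ α * mhat + 1))⁻¹) :
    (N : ℝ)⁻¹ * ∑ α : Fin M,
        (σ α) ^ 2 * ‖mhat‖ ^ 2 / ‖(σ α * mhat + 1 : ℂ)‖ ^ 2 =
      1 - η * ‖mhat‖ ^ 2 / mhat.im ∧
    (N : ℝ)⁻¹ * ∑ α : Fin M,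
        (σ α) ^ 2 * ‖mhat‖ ^ 2 / ‖(σ α * mhat + 1 : ℂ)‖ ^ 2 < 1 := by
  have hinv : mhat⁻¹ = -z + (((N : ℝ)⁻¹ : ℝ) : ℂ) * ∑ α, (σ α : ℂ) / (σ α * mhat + 1) := by
    push_cast
    exact inv_eq_iff_eq_inv.mpr hself
  have hid := self_consistent_im_identity σ _ z mhat hmhat.ne' hinv
  rw [hz] at hid
  have hpos : 0 < η * ‖mhat‖ ^ 2 / mhat.im := by
    have : mhat ≠ 0 := fun h => hmhat.ne' (by rw [h, zero_im])
    positivity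
  exact ⟨hid, by linarith⟩

/-- the finite (empirical) self-consistent equation implies
`(1/N)∑ σ_α²|m̂|²/|σ_α m̂+1|² = 1 − η|m̂|²/Im m̂ < 1`. -/
theorem empirical_self_consistent_imaginary_part_identity
    (N M : ℕ) (hN : 0 < N) (hM : 0 < M)
    (σ : Fin M → ℝ) (hσ : ∀ α, σ α ∈ Set.Ioc (0 : ℝ) 1)
    (E η : ℝ) (hη : 0 < η) (z : ℂ) (hz : z = Complex.mk E η)
    (mhat : ℂ) (hmhat : 0 < mhat.im)
    (hself : mhat =
      (-z + (N : ℂ)⁻¹ * ∑ α : Fin M, (σ α : ℂ) / (σ α * mhat + 1))⁻¹) :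
    (N : ℝ)⁻¹ * ∑ α : Fin M,
        (σ α) ^ 2 * ‖mhat‖ ^ 2 / ‖(σ α * mhat + 1 : ℂ)‖ ^ 2 =
      1 - η * ‖mhat‖ ^ 2 / mhat.im ∧
    (N : ℝ)⁻¹ * ∑ α : Fin M,
        (σ α) ^ 2 * ‖mhat‖ ^ 2 / ‖(σ α * mhat + 1 : ℂ)‖ ^ 2 < 1 :=
  empirical_self_consistent_imaginary_part_identity_general N M σ E η hη z hz mhat hmhat hself
end

section
/- Let ν be a Jacobi measure with parameters 0 < l < 1 and β > 1, let d > d_+, and set L_+ = 1 + τ_+. Let z lie in the upper half-plane and let m = m(z) ∈ ℂ with Im m > 0 satisfy the self-consistent equation m = (−z + d^{-1}∫_l^1 t/(1 + t m) dν(t))^{-1}. Define T(z) := −d^{-1}∫_l^1 t² m/((1 + t m)(1 − t)) dν(t). Then |T(z)| ≤ √(d_+/d) < 1, and 1/m + 1 = (L_+ − z)/(1 − T(z)); consequently |1/m + 1| ≤ (√d/(√d − √d_+))·|L_+ − z|. -/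
open MeasureTheory Set

/-!
Subtracting `t / (1 - t)` from the integrand of the self-consistent equation leaves
`-(1/m + 1) · t² m / ((1 + t m)(1 - t))`, so `(1/m + 1)(1 - T) = L₊ - z`. Writing the integrand
of `T` as `(t m / (1 + t m)) · (t / (1 - t))`, Cauchy–Schwarz gives
`|T| ≤ d⁻¹ (|m|² ∫ |t / (1 + t m)|² dν)^{1/2} d₊^{1/2}`, and the imaginary part of the
self-consistent equation, `Im m / |m|² = Im z + d⁻¹ Im m ∫ |t / (1 + t m)|² dν`, bounds the first
factor by `d^{1/2}`. The weight `(1 - t)^β` with `β > 1` makes `d₊` finite.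
-/

lemma norm_integral_mul_le_sqrt_mul_sqrt {α 𝕜 : Type*} [MeasurableSpace α] [RCLike 𝕜]
    {μ : Measure α} {f g : α → 𝕜} (hf : MemLp f 2 μ) (hg : MemLp g 2 μ) :
    ‖∫ a, f a * g a ∂μ‖ ≤ √(∫ a, ‖f a‖ ^ 2 ∂μ) * √(∫ a, ‖g a‖ ^ 2 ∂μ) := by
  have holder := integral_mul_norm_le_Lp_mul_Lq Real.HolderConjugate.two_two
    (by simpa using hf) (by simpa using hg)
  simp only [Real.rpow_two, ← Real.sqrt_eq_rpow] at holder
  calc ‖∫ a, f a * g a ∂μ‖ ≤ ∫ a, ‖f a‖ * ‖g a‖ ∂μ := by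
        simpa only [norm_mul] using norm_integral_le_integral_norm (μ := μ) (fun a => f a * g a)
    _ ≤ _ := holder

lemma div_one_add_mul_sub_div_one_sub {K : Type*} [Field K] {x m : K} (hx : 1 - x ≠ 0)
    (hm : m ≠ 0) (hxm : 1 + x * m ≠ 0) :
    x / (1 + x * m) - x / (1 - x) = -(1 / m + 1) * (x ^ 2 * m / ((1 + x * m) * (1 - x))) := by
  field_simp
  ring

lemma norm_le_of_mul_one_sub_eq {K : Type*} [NormedField K] {w u T : K} {r : ℝ}
    (hT : ‖T‖ ≤ r) (hr : r < 1) (h : w * (1 - T) = u) : ‖w‖ ≤ (1 - r)⁻¹ * ‖u‖ := by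
  have hlow : 1 - r ≤ ‖1 - T‖ := by
    have := norm_sub_norm_le (1 : K) T
    rw [norm_one] at this
    linarith
  rw [inv_mul_eq_div, le_div_iff₀ (by linarith), ← h, norm_mul]
  exact mul_le_mul_of_nonneg_left hlow (norm_nonneg w)

lemma integrableOn_one_sub_rpow {l : ℝ} (hl : l < 1) {r : ℝ} (hr : -1 < r) :
    IntegrableOn (fun t : ℝ => (1 - t) ^ r) (Ico l 1) := by
  have h := (intervalIntegral.intervalIntegrable_rpow' hr (a := 0) (b := 1 - l)).comp_sub_left 1
  rw [sub_zero, sub_sub_cancel] at h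
  exact ((intervalIntegrable_iff_integrableOn_Icc_of_le hl.le).1 h.symm).mono_set
    Ico_subset_Icc_self

section UpperHalfPlane

variable {m : ℂ}

lemma one_add_ofReal_mul_ne_zero (hm : 0 < m.im) (t : ℝ) : 1 + t * m ≠ 0 := by
  intro h
  have him : t * m.im = 0 := by simpa using congrArg Complex.im h
  rcases mul_eq_zero.1 him with rfl | him
  · simp at h
  · exact hm.ne' him

lemma im_ofReal_div_one_add_mul (t : ℝ) (m : ℂ) :
    ((t : ℂ) / (1 + t * m)).im = -m.im * ‖(t : ℂ) / (1 + t * m)‖ ^ 2 := by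
  rw [Complex.div_im, Complex.sq_norm, Complex.normSq_div, Complex.normSq_ofReal]
  simp only [Complex.ofReal_im, Complex.ofReal_re, Complex.add_im, Complex.one_im, Complex.mul_im,
    zero_mul, add_zero, zero_add, zero_div, zero_sub]
  ring

lemma norm_ofReal_div_one_add_mul_le (hm : 0 < m.im) (t : ℝ) :
    ‖(t : ℂ) / (1 + t * m)‖ ≤ (m.im)⁻¹ := by
  rcases eq_or_ne t 0 with rfl | ht
  · simp [hm.le]
  have hden : |t| * m.im ≤ ‖1 + t * m‖ := by
    calc |t| * m.im = |(1 + t * m).im| := by simp [abs_mul, abs_of_pos hm]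
      _ ≤ ‖1 + t * m‖ := Complex.abs_im_le_norm _
  rw [norm_div, Complex.norm_real, Real.norm_eq_abs,
    div_le_iff₀ ((by positivity : 0 < |t| * m.im).trans_le hden)]
  calc |t| = m.im⁻¹ * (|t| * m.im) := by field_simp
    _ ≤ _ := mul_le_mul_of_nonneg_left hden (by positivity)

end UpperHalfPlane

section SelfConsistent

variable {ν : Measure ℝ} {d : ℝ} {z m : ℂ}

lemma sq_norm_mul_integral_sq_norm_le (hd : 0 < d) (hz : 0 ≤ z.im) (hm : 0 < m.im)
    (hint : Integrable (fun t : ℝ => (t : ℂ) / (1 + t * m)) ν)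
    (hself : m⁻¹ = -z + (d : ℂ)⁻¹ * ∫ t, (t : ℂ) / (1 + t * m) ∂ν) :
    ‖m‖ ^ 2 * ∫ t, ‖(t : ℂ) / (1 + t * m)‖ ^ 2 ∂ν ≤ d := by
  set S := ∫ t, ‖(t : ℂ) / (1 + t * m)‖ ^ 2 ∂ν
  have him : (∫ t, (t : ℂ) / (1 + t * m) ∂ν).im = -m.im * S := by
    rw [← RCLike.im_to_complex, ← integral_im hint]
    simp only [RCLike.im_to_complex, im_ofReal_div_one_add_mul]
    exact integral_const_mul _ _
  have hm0 : 0 < ‖m‖ := norm_pos_iff.2 fun h => by simp [h] at hm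
  have heq := congrArg Complex.im hself
  rw [Complex.inv_im, ← Complex.sq_norm, Complex.add_im, Complex.neg_im, ← Complex.ofReal_inv,
    Complex.im_ofReal_mul, him] at heq
  field_simp at heq
  nlinarith [mul_pos hd (pow_pos hm0 2)]

lemma sq_norm_ofReal_div_one_sub (t : ℝ) : ‖(t : ℂ) / (1 - t)‖ ^ 2 = t ^ 2 / (1 - t) ^ 2 := by
  simp [← Complex.ofReal_one, ← Complex.ofReal_sub, ← Complex.ofReal_div, div_pow]

lemma memLp_ofReal_div_one_sub (hq : Integrable (fun t : ℝ => t ^ 2 / (1 - t) ^ 2) ν) :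
    MemLp (fun t : ℝ => (t : ℂ) / (1 - t)) 2 ν := by
  rw [memLp_two_iff_integrable_sq_norm (by fun_prop : Measurable _).aestronglyMeasurable]
  simpa only [sq_norm_ofReal_div_one_sub] using hq

lemma integral_ofReal_div_one_sub :
    ∫ t, (t : ℂ) / (1 - t) ∂ν = ((∫ t, t / (1 - t) ∂ν : ℝ) : ℂ) := by
  rw [← integral_complex_ofReal]
  push_cast
  rfl

variable [IsFiniteMeasure ν]

lemma memLp_ofReal_div_one_add_mul (hm : 0 < m.im) :
    MemLp (fun t : ℝ => (t : ℂ) / (1 + t * m)) 2 ν :=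
  .of_bound (by fun_prop : Measurable _).aestronglyMeasurable _
    (ae_of_all _ (norm_ofReal_div_one_add_mul_le hm))

lemma norm_inv_mul_integral_le_sqrt (hd : 0 < d) (hz : 0 ≤ z.im) (hm : 0 < m.im)
    (hq : Integrable (fun t : ℝ => t ^ 2 / (1 - t) ^ 2) ν)
    (hself : m⁻¹ = -z + (d : ℂ)⁻¹ * ∫ t, (t : ℂ) / (1 + t * m) ∂ν) :
    ‖(d : ℂ)⁻¹ * ∫ t, (t : ℂ) ^ 2 * m / ((1 + t * m) * (1 - t)) ∂ν‖ ≤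
      √((∫ t, t ^ 2 / (1 - t) ^ 2 ∂ν) / d) := by
  have hF := memLp_ofReal_div_one_add_mul (ν := ν) hm
  have hS := sq_norm_mul_integral_sq_norm_le hd hz hm (hF.integrable one_le_two) hself
  have hCS := norm_integral_mul_le_sqrt_mul_sqrt (hF.const_mul m) (memLp_ofReal_div_one_sub hq)
  simp only [norm_mul, mul_pow, integral_const_mul, sq_norm_ofReal_div_one_sub] at hCS
  have hfactor : ∀ t : ℝ, (t : ℂ) ^ 2 * m / ((1 + t * m) * (1 - t)) =
      m * ((t : ℂ) / (1 + t * m)) * ((t : ℂ) / (1 - t)) := fun t => by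
    simp only [div_eq_mul_inv, mul_inv]; ring
  simp only [hfactor, norm_mul, norm_inv, Complex.norm_real, Real.norm_of_nonneg hd.le,
    Real.sqrt_div' _ hd.le]
  rw [inv_mul_le_iff₀ hd]
  have hsqrt_d : 0 < √d := Real.sqrt_pos.2 hd
  calc _ ≤ √(‖m‖ ^ 2 * ∫ t, ‖(t : ℂ) / (1 + t * m)‖ ^ 2 ∂ν) * √(∫ t, t ^ 2 / (1 - t) ^ 2 ∂ν) :=
        hCS
    _ ≤ √d * √(∫ t, t ^ 2 / (1 - t) ^ 2 ∂ν) := by gcongr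
    _ = d * (√(∫ t, t ^ 2 / (1 - t) ^ 2 ∂ν) / √d) := by
      rw [mul_div_assoc', eq_div_iff hsqrt_d.ne', mul_right_comm, Real.mul_self_sqrt hd.le]

lemma one_div_add_one_mul_eq (hm : 0 < m.im) (hν1 : ∀ᵐ t ∂ν, t ≠ 1)
    (hq : Integrable (fun t : ℝ => t ^ 2 / (1 - t) ^ 2) ν)
    (hself : m⁻¹ = -z + (d : ℂ)⁻¹ * ∫ t, (t : ℂ) / (1 + t * m) ∂ν) :
    (1 / m + 1) * (1 + (d : ℂ)⁻¹ * ∫ t, (t : ℂ) ^ 2 * m / ((1 + t * m) * (1 - t)) ∂ν) =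
      ((1 + d⁻¹ * ∫ t, t / (1 - t) ∂ν : ℝ) : ℂ) - z := by
  have hm0 : m ≠ 0 := fun h => by simp [h] at hm
  have hsub : ∫ t, (t : ℂ) / (1 + t * m) ∂ν - ∫ t, (t : ℂ) / (1 - t) ∂ν =
      -(1 / m + 1) * ∫ t, (t : ℂ) ^ 2 * m / ((1 + t * m) * (1 - t)) ∂ν := by
    rw [← integral_sub ((memLp_ofReal_div_one_add_mul hm).integrable one_le_two)
      ((memLp_ofReal_div_one_sub hq).integrable one_le_two), ← integral_const_mul]
    refine integral_congr_ae ?_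
    filter_upwards [hν1] with t ht
    refine div_one_add_mul_sub_div_one_sub ?_ hm0 (one_add_ofReal_mul_ne_zero hm t)
    exact_mod_cast sub_ne_zero.2 ht.symm
  rw [integral_ofReal_div_one_sub] at hsub
  push_cast
  linear_combination hself + (d : ℂ)⁻¹ * hsub

end SelfConsistent

namespace IsJacobi

variable {ν : Measure ℝ} {l β Z : ℝ} {f : ℝ → ℝ}

lemma absolutelyContinuous (hν : IsJacobi ν l β f Z) : ν ≪ volume :=
  hν.eq_density ▸ withDensity_absolutelyContinuous _ _

lemma ae_ne_one (hν : IsJacobi ν l β f Z) : ∀ᵐ t ∂ν, t ≠ 1 :=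
  hν.absolutelyContinuous.ae_le (Measure.ae_ne volume 1)

lemma aemeasurable_jacobiDensity (hν : IsJacobi ν l β f Z) :
    AEMeasurable (jacobiDensity l β Z f) volume := by
  rw [jacobiDensity, aemeasurable_indicator_iff measurableSet_Icc]
  exact (by fun_prop : Measurable fun t : ℝ => Z⁻¹ * (1 - t) ^ β).aemeasurable.mul
    (hν.f_C1.continuousOn.aemeasurable measurableSet_Icc)

lemma integrable_of_norm_le_rpow (hν : IsJacobi ν l β f Z) {E : Type*} [NormedAddCommGroup E]
    [NormedSpace ℝ E] {h : ℝ → E} {p C : ℝ} (hp : p < β + 1) (hh : AEStronglyMeasurable h volume)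
    (hbound : ∀ t ∈ Ico l 1, ‖h t‖ ≤ C * (1 - t) ^ (-p)) : Integrable h ν := by
  obtain ⟨F, hF⟩ := isCompact_Icc.exists_bound_of_continuousOn hν.f_C1.continuousOn
  have hF0 : 0 ≤ F := (norm_nonneg _).trans (hF l ⟨le_rfl, hν.l_lt_one.le⟩)
  rw [hν.eq_density, integrable_withDensity_iff_integrable_smul₀'
    hν.aemeasurable_jacobiDensity.ennreal_ofReal (ae_of_all _ fun _ => ENNReal.ofReal_lt_top)]
  have hdom : IntegrableOn (fun t => |Z⁻¹| * F * C * (1 - t) ^ (β - p)) (Ico l 1) :=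
    (integrableOn_one_sub_rpow hν.l_lt_one (by linarith)).const_mul _
  refine (hdom.integrable_indicator measurableSet_Ico).mono' ?_ ?_
  · exact hν.aemeasurable_jacobiDensity.ennreal_ofReal.ennreal_toReal.aestronglyMeasurable.smul hh
  filter_upwards [Measure.ae_ne volume 1] with t ht1
  by_cases ht : t ∈ Ico l 1
  · have h1t : 0 < 1 - t := sub_pos.2 ht.2
    have hdens : |max (Z⁻¹ * (1 - t) ^ β * f t) 0| ≤ |Z⁻¹| * (1 - t) ^ β * F := by
      rw [abs_of_nonneg (le_max_right _ _), max_le_iff]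
      refine ⟨(le_abs_self _).trans ?_, by positivity⟩
      rw [abs_mul, abs_mul, abs_of_pos (Real.rpow_pos_of_pos h1t β)]
      exact mul_le_mul_of_nonneg_left (hF t (Ico_subset_Icc_self ht)) (by positivity)
    rw [indicator_of_mem ht, norm_smul, ENNReal.toReal_ofReal', jacobiDensity,
      indicator_of_mem (Ico_subset_Icc_self ht), Real.norm_eq_abs, sub_eq_add_neg β,
      Real.rpow_add h1t]
    calc _ ≤ |Z⁻¹| * (1 - t) ^ β * F * (C * (1 - t) ^ (-p)) :=
          mul_le_mul hdens (hbound t ht) (norm_nonneg _) (by positivity)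
      _ = _ := by ring
  · have hIcc : t ∉ Icc l 1 := fun h => ht ⟨h.1, lt_of_le_of_ne h.2 ht1⟩
    simp [jacobiDensity, hIcc, ht]

lemma integrable_sq_div_one_sub_sq (hν : IsJacobi ν l β f Z) (hβ : 1 < β) :
    Integrable (fun t : ℝ => t ^ 2 / (1 - t) ^ 2) ν := by
  refine hν.integrable_of_norm_le_rpow (p := 2) (C := 1) (by linarith)
    (by fun_prop : Measurable _).aestronglyMeasurable fun t ht => ?_
  have h1t : 0 < 1 - t := sub_pos.2 ht.2
  have ht0 : 0 ≤ t := hν.l_pos.le.trans ht.1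
  rw [Real.norm_of_nonneg (by positivity), one_mul, Real.rpow_neg h1t.le, Real.rpow_two,
    ← one_div]
  gcongr
  nlinarith [ht.2]

end IsJacobi

/-- in the supercritical regime `d > d₊`, the quantity
`T(z) = −d⁻¹∫ t² m /((1+tm)(1−t)) dν` satisfies `|T(z)| ≤ √(d₊/d) < 1` and
`1/m + 1 = (L₊ − z)/(1 − T(z))`, whence `|1/m + 1| ≤ (√d/(√d − √d₊))|L₊ − z|`. -/
theorem approximate_linearity_at_edge
    (ν : Measure ℝ) (l β : ℝ) (f : ℝ → ℝ) (Z : ℝ)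
    (hν : IsJacobi ν l β f Z) (hβ : 1 < β)
    (d : ℝ) (hd : 0 < d)
    (dplus τplus Lplus : ℝ)
    (hdplus : dplus = ∫ t, t ^ 2 / (1 - t) ^ 2 ∂ν)
    (hτplus : τplus = d⁻¹ * ∫ t, t / (1 - t) ∂ν)
    (hLplus : Lplus = 1 + τplus)
    (hd_super : dplus < d)
    (z : ℂ) (hz : 0 < z.im)
    (m : ℂ) (hm : 0 < m.im)
    (hself : m = (-z + (d : ℂ)⁻¹ * ∫ t, (t : ℂ) / (1 + t * m) ∂ν)⁻¹)
    (T : ℂ)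
    (hT : T = -((d : ℂ)⁻¹ * ∫ t, (t : ℂ) ^ 2 * m / ((1 + t * m) * (1 - t)) ∂ν)) :
    ‖T‖ ≤ Real.sqrt (dplus / d) ∧ Real.sqrt (dplus / d) < 1 ∧
    1 / m + 1 = ((Lplus : ℂ) - z) / (1 - T) ∧
    ‖1 / m + 1‖ ≤
      Real.sqrt d / (Real.sqrt d - Real.sqrt dplus) * ‖(Lplus : ℂ) - z‖ := by
  have := hν.prob
  have hq := hν.integrable_sq_div_one_sub_sq hβ
  have hinv := inv_eq_iff_eq_inv.2 hself
  have hT_le : ‖T‖ ≤ √(dplus / d) := by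
    rw [hT, norm_neg, hdplus]
    exact norm_inv_mul_integral_le_sqrt hd hz.le hm hq hinv
  have hsqrt_lt : √(dplus / d) < 1 :=
    (Real.sqrt_lt' one_pos).2 (by rw [one_pow]; exact (div_lt_one hd).2 hd_super)
  have hid : (1 / m + 1) * (1 - T) = Lplus - z := by
    rw [hT, sub_neg_eq_add, one_div_add_one_mul_eq hm hν.ae_ne_one hq hinv, hLplus, hτplus]
  have hT_ne : 1 - T ≠ 0 := fun h => by
    rw [← sub_eq_zero.1 h, norm_one] at hT_le
    linarith
  have hconst : √d / (√d - √dplus) = (1 - √(dplus / d))⁻¹ := by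
    rw [Real.sqrt_div' _ hd.le, one_sub_div (Real.sqrt_pos.2 hd).ne', inv_div]
  refine ⟨hT_le, hsqrt_lt, eq_div_of_mul_eq hT_ne hid, ?_⟩
  rw [hconst]
  exact norm_le_of_mul_one_sub_eq hT_le hsqrt_lt hid
end
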